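/- Fix a real q > 1, a positive integer t, and nonnegative reals μ_1 ≤ μ_2 ≤ … ≤ μ_t with μ_t strictly larger than all μ_i for i < t. Define S(z) = ∑ q^(∑_{i=1}^t μ_i c_i), the sum over all t-tuples (c_1,…,c_t) of positive integers with c_1 + … + c_t = z. Then S(z) / q^(μ_t z) converges, as z → ∞ through the integers, to ∏_{i=1}^{t-1} (q^(μ_t - μ_i) - 1)^{-1}. -/

import Mathlib

/-!
Write `T` for the last index and `x i = q ^ (μ T - μ i) > 1` for `i ≠ T`. Dividing by
`q ^ (μ T * z)` turns the summand of a composition `c` of `z` into `∏_{i ≠ T} (x i)⁻¹ ^ c i`, in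
which the last part no longer appears. A composition is determined by its first `t` parts, which
range over the positive tuples with sum `< z`; these finite sets exhaust all tuples, so the
normalized sums are partial sums of the absolutely convergent series
`∑_d ∏_i [d i > 0] (x i)⁻¹ ^ d i = ∏_i ∑_{k ≥ 1} (x i)⁻¹ ^ k = ∏_i (x i - 1)⁻¹`.
-/

open Filter Finset

theorem hasSum_pi_prod {𝕜 β : Type*} [RCLike 𝕜] {n : ℕ} {g : Fin n → β → 𝕜} {a : Fin n → 𝕜}
    (ha : ∀ i, HasSum (g i) (a i)) :
    HasSum (fun d : Fin n → β => ∏ i, g i (d i)) (∏ i, a i) := by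
  induction n with
  | zero => simp
  | succ n ih =>
    have htail : HasSum (fun d : Fin n → β => ∏ i, g i.succ (d i)) (∏ i : Fin n, a i.succ) :=
      ih fun i => ha i.succ
    -- Summable families in a finite-dimensional space are absolutely summable, so the product of
    -- the two series is summable.
    have hsummable := summable_mul_of_summable_norm (ha 0).summable.norm htail.summable.norm
    rw [Fin.prod_univ_succ]
    refine (Fin.consEquiv fun _ => β).hasSum_iff.mp (((ha 0).mul htail hsummable).congr_fun ?_)
    simp [Fin.prod_univ_succ]

theorem hasSum_ite_eq_zero_inv_pow {x : ℝ} (hx : 1 < x) :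
    HasSum (fun k : ℕ => if k = 0 then 0 else x⁻¹ ^ k) (x - 1)⁻¹ := by
  have hx0 : x ≠ 0 := by positivity
  have hgeom :=
    (hasSum_geometric_of_lt_one (by positivity) (inv_lt_one_of_one_lt₀ hx)).mul_left x⁻¹
  have hval : x⁻¹ * (1 - x⁻¹)⁻¹ = (x - 1)⁻¹ := by
    field_simp
  rw [← hasSum_nat_add_iff' 1]
  simpa [pow_succ', hval] using hgeom

def tuplesSumLt (t z : ℕ) : Finset (Fin t → ℕ) :=
  {d ∈ Fintype.piFinset fun _ => range z | ∑ i, d i < z}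

theorem mem_tuplesSumLt {t z : ℕ} {d : Fin t → ℕ} : d ∈ tuplesSumLt t z ↔ ∑ i, d i < z := by
  simp only [tuplesSumLt, mem_filter, Fintype.mem_piFinset, mem_range, and_iff_right_iff_imp]
  exact fun h i => (single_le_sum (fun j _ => Nat.zero_le (d j)) (mem_univ i)).trans_lt h

theorem tendsto_tuplesSumLt (t : ℕ) : Tendsto (tuplesSumLt t) atTop atTop :=
  tendsto_atTop_finset_of_monotone
    (fun _ _ hzw _ hd => mem_tuplesSumLt.2 ((mem_tuplesSumLt.1 hd).trans_le hzw))
    fun d => ⟨∑ i, d i + 1, mem_tuplesSumLt.2 (Nat.lt_succ_self _)⟩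

theorem sum_tuplesSumLt_filter_pos_snoc {M : Type*} [AddCommMonoid M] (t z : ℕ)
    (f : (Fin (t + 1) → ℕ) → M) :
    ∑ d ∈ (tuplesSumLt t z).filter (fun d => ∀ i, 0 < d i), f (Fin.snoc d (z - ∑ i, d i)) =
      ∑ c ∈ (Nat.antidiagonalTuple (t + 1) z).filter (fun c => ∀ i, 0 < c i), f c := by
  refine sum_nbij' (fun d => Fin.snoc d (z - ∑ i, d i)) (· ∘ Fin.castSucc) ?_ ?_ ?_ ?_
    fun _ _ => rfl
  · intro d hd
    simp only [mem_filter, mem_tuplesSumLt, Nat.mem_antidiagonalTuple, Fin.sum_snoc] at hd ⊢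
    refine ⟨by omega, Fin.lastCases ?_ fun i => ?_⟩ <;> simp [hd.2, hd.1]
  · intro c hc
    simp only [mem_filter, mem_tuplesSumLt, Nat.mem_antidiagonalTuple, Fin.sum_univ_castSucc]
      at hc ⊢
    exact ⟨by have := hc.2 (Fin.last t); simp only [Function.comp_apply]; omega, fun i => hc.2 _⟩
  · intro d _
    simp [Function.comp_def]
  · intro c hc
    simp only [mem_filter, Nat.mem_antidiagonalTuple, Fin.sum_univ_castSucc] at hc
    ext i
    refine Fin.lastCases ?_ (fun i => ?_) i <;> simp [Function.comp_def]
    omega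

theorem rpow_sum_mul_div_rpow_last {q : ℝ} (hq : 0 < q) {t : ℕ} (μ : Fin (t + 1) → ℝ)
    {z : ℕ} {c : Fin (t + 1) → ℕ} (hc : ∑ i, c i = z) :
    q ^ (∑ i, μ i * (c i : ℝ)) / q ^ (μ (Fin.last t) * (z : ℝ)) =
      ∏ i : Fin t, (q ^ (μ (Fin.last t) - μ i.castSucc))⁻¹ ^ c i.castSucc := by
  rw [← hc, Nat.cast_sum, ← Real.rpow_sub hq, mul_sum, ← sum_sub_distrib,
    Real.rpow_sum_of_pos hq, Fin.prod_univ_castSucc, sub_self, Real.rpow_zero, mul_one]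
  refine prod_congr rfl fun i _ => ?_
  rw [← Real.rpow_neg hq.le, ← Real.rpow_natCast, ← Real.rpow_mul hq.le]
  ring_nf

theorem stmt_7_general (q : ℝ) (hq : 1 < q) (t : ℕ) (μ : Fin (t + 1) → ℝ)
    (hmax : ∀ i : Fin (t + 1), i ≠ Fin.last t → μ i < μ (Fin.last t)) :
    Filter.Tendsto
      (fun z : ℕ =>
        (∑ c ∈ (Finset.Nat.antidiagonalTuple (t + 1) z).filter (fun c => ∀ i, 0 < c i),
            q ^ (∑ i, μ i * (c i : ℝ)))
          / q ^ (μ (Fin.last t) * (z : ℝ)))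
      Filter.atTop
      (nhds (∏ i ∈ Finset.univ.erase (Fin.last t), (q ^ (μ (Fin.last t) - μ i) - 1)⁻¹)) := by
  set x : Fin t → ℝ := fun i => q ^ (μ (Fin.last t) - μ i.castSucc)
  have hx : ∀ i, 1 < x i := fun i =>
    Real.one_lt_rpow hq (sub_pos.2 (hmax _ (Fin.castSucc_lt_last i).ne))
  have hseries : HasSum (fun d : Fin t → ℕ => ∏ i, if d i = 0 then 0 else (x i)⁻¹ ^ d i)
      (∏ i, (x i - 1)⁻¹) :=
    hasSum_pi_prod (g := fun i k => if k = 0 then 0 else (x i)⁻¹ ^ k) fun i =>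
      hasSum_ite_eq_zero_inv_pow (hx i)
  rw [← compl_singleton, ← Fin.image_castSucc, prod_image (Fin.castSucc_injective t).injOn]
  refine (hseries.comp (tendsto_tuplesSumLt t)).congr fun z => ?_
  rw [Function.comp_apply, sum_div, ← sum_tuplesSumLt_filter_pos_snoc, sum_filter]
  refine sum_congr rfl fun d hd => ?_
  have hsum : ∑ i, (Fin.snoc d (z - ∑ i, d i) : Fin (t + 1) → ℕ) i = z := by
    have := mem_tuplesSumLt.1 hd
    rw [Fin.sum_snoc]
    omega
  split_ifs with hpos
  · rw [rpow_sum_mul_div_rpow_last (one_pos.trans hq) μ hsum]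
    exact prod_congr rfl fun i _ => by simp [x, (hpos i).ne']
  · obtain ⟨i, hi⟩ := not_forall.1 hpos
    exact prod_eq_zero (mem_univ i) (if_pos (Nat.eq_zero_of_not_pos hi))

/-- Balanced multi-summation asymptotics with a unique maximal exponent: for `q > 1` and
nonnegative reals `μ 0 ≤ … ≤ μ t` with `μ` maximal exactly at the last index, the sum
`S z = ∑ q^(∑ μ i * c i)` over compositions `c` of `z` into `t+1` positive parts satisfies
`S z / q^(μ_last z) → ∏_{i ≠ last} (q^(μ_last - μ i) - 1)⁻¹`. -/
theorem stmt_7 (q : ℝ) (hq : 1 < q) (t : ℕ) (μ : Fin (t + 1) → ℝ)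
    (hμ0 : ∀ i, 0 ≤ μ i) (hmono : Monotone μ)
    (hmax : ∀ i : Fin (t + 1), i ≠ Fin.last t → μ i < μ (Fin.last t)) :
    Filter.Tendsto
      (fun z : ℕ =>
        (∑ c ∈ (Finset.Nat.antidiagonalTuple (t + 1) z).filter (fun c => ∀ i, 0 < c i),
            q ^ (∑ i, μ i * (c i : ℝ)))
          / q ^ (μ (Fin.last t) * (z : ℝ)))
      Filter.atTop
      (nhds (∏ i ∈ Finset.univ.erase (Fin.last t), (q ^ (μ (Fin.last t) - μ i) - 1)⁻¹)) :=
  stmt_7_general q hq t μ hmax
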